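/- With M(·) the transportation LP from an arbitrary subset to the whole n-point metric space, ∑_{k=1}^{n} E_{S_k ~ U_k}[M(S_k)] ≤ 2·∑_{k=1}^{⌊n/2⌋} E_{S_k ~ U_k}[M(S_k)], where U_k is the uniform distribution on k-subsets. -/

import Mathlib

/-!
With `μ_T` the uniform probability on `T` and `ν` the uniform one on all `n` points, `M(T)` is the
optimal cost of coupling `μ_T` with `ν`. For a metric cost this only depends on `μ_T - ν`:
mass common to both marginals can be cancelled, since a unit entering a point and a unit leaving
it can be joined into a single move that is no longer, by the triangle inequality.
As `ν = (m/n) μ_T + (a/n) μ_Tᶜ` with `m = |T|`, `a = |Tᶜ|`, we get `μ_Tᶜ - ν = -(m/a) (μ_T - ν)`,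
hence `M(Tᶜ) ≤ (m/a) M(T) ≤ M(T)` when `m ≤ n/2`. Complementation matches the `k`-subsets with
the `(n-k)`-subsets, so the expectation for each `k > n/2` is bounded by the one for `n - k`
(the term `k = n` vanishes, as `M(S) = 0`), which gives the factor `2`.
-/

open Finset

/-- `transportVal n d T` is the optimal value of the fractional transportation LP between
the subset `T` of the `n`-point space (each point of `T` with supply `1/|T|`) and the whole
space (each point with demand `1/n`), with costs `d`. -/
noncomputable def transportVal (n : ℕ) (d : Fin n → Fin n → ℝ) (T : Finset (Fin n)) : ℝ :=
  sInf {c : ℝ | ∃ x : Fin n → Fin n → ℝ,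
    (∀ i j, 0 ≤ x i j) ∧
    (∀ i ∈ T, ∑ j, x i j = 1 / (T.card : ℝ)) ∧
    (∀ j, ∑ i ∈ T, x i j = 1 / (n : ℝ)) ∧
    c = ∑ i ∈ T, ∑ j, d i j * x i j}

open Matrix

section uniformWeight
variable {α : Type*} [DecidableEq α]

noncomputable def uniformWeight (T : Finset α) : α → ℝ :=
  fun i ↦ if i ∈ T then (#T : ℝ)⁻¹ else 0

theorem uniformWeight_nonneg (T : Finset α) : 0 ≤ uniformWeight T := fun i ↦ by
  unfold uniformWeight; split_ifs <;> positivity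

end uniformWeight

section Coupling
variable {α : Type*} [Fintype α] {d : α → α → ℝ} {π π' : Matrix α α ℝ}
  {μ ν μ' ν' ρ : α → ℝ} {p : α} {r : ℝ}

structure IsCoupling (π : Matrix α α ℝ) (μ ν : α → ℝ) : Prop where
  nonneg : ∀ i j, 0 ≤ π i j
  sum_row : ∀ i, ∑ j, π i j = μ i
  sum_col : ∀ j, ∑ i, π i j = ν j

def transportCost (d : α → α → ℝ) (π : Matrix α α ℝ) : ℝ := ∑ i, ∑ j, d i j * π i j

namespace IsCoupling

theorem add (h : IsCoupling π μ ν) (h' : IsCoupling π' μ' ν') :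
    IsCoupling (π + π') (μ + μ') (ν + ν') where
  nonneg i j := add_nonneg (h.nonneg i j) (h'.nonneg i j)
  sum_row i := by simp [sum_add_distrib, h.sum_row, h'.sum_row]
  sum_col j := by simp [sum_add_distrib, h.sum_col, h'.sum_col]

theorem smul (h : IsCoupling π μ ν) {c : ℝ} (hc : 0 ≤ c) :
    IsCoupling (c • π) (c • μ) (c • ν) where
  nonneg i j := mul_nonneg hc (h.nonneg i j)
  sum_row i := by simp [← mul_sum, h.sum_row]
  sum_col j := by simp [← mul_sum, h.sum_col]

theorem transpose (h : IsCoupling π μ ν) : IsCoupling πᵀ ν μ where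
  nonneg i j := h.nonneg j i
  sum_row := h.sum_col
  sum_col := h.sum_row

theorem apply_eq_zero (h : IsCoupling π μ ν) {i : α} (hi : μ i = 0) (j : α) : π i j = 0 :=
  (sum_eq_zero_iff_of_nonneg fun j _ ↦ h.nonneg i j).1 (hi ▸ h.sum_row i) j (mem_univ j)

end IsCoupling

theorem transportCost_add :
    transportCost d (π + π') = transportCost d π + transportCost d π' := by
  simp [transportCost, mul_add, sum_add_distrib]

theorem transportCost_smul (c : ℝ) : transportCost d (c • π) = c * transportCost d π := by
  simp [transportCost, mul_sum, mul_left_comm]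

theorem transportCost_transpose (d_symm : ∀ i j, d i j = d j i) :
    transportCost d πᵀ = transportCost d π := by
  rw [transportCost, sum_comm]
  simp [transportCost, d_symm]

theorem transportCost_nonneg (d_nonneg : ∀ i j, 0 ≤ d i j) (hπ : ∀ i j, 0 ≤ π i j) :
    0 ≤ transportCost d π :=
  sum_nonneg fun i _ ↦ sum_nonneg fun j _ ↦ mul_nonneg (d_nonneg i j) (hπ i j)

theorem isCoupling_vecMulVec (hμ : 0 ≤ μ) (hν : 0 ≤ ν) (hμ₁ : ∑ i, μ i = 1)
    (hν₁ : ∑ j, ν j = 1) : IsCoupling (vecMulVec μ ν) μ ν where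
  nonneg i j := mul_nonneg (hμ i) (hν j)
  sum_row i := by simp [vecMulVec_apply, ← mul_sum, hν₁]
  sum_col j := by simp [vecMulVec_apply, ← sum_mul, hμ₁]

theorem bddBelow_transportCost_image (d_nonneg : ∀ i j, 0 ≤ d i j)
    (μ ν : α → ℝ) : BddBelow (transportCost d '' {π | IsCoupling π μ ν}) :=
  ⟨0, by rintro _ ⟨π, hπ, rfl⟩; exact transportCost_nonneg d_nonneg hπ.nonneg⟩

variable [DecidableEq α]

theorem transportCost_diagonal (d_self : ∀ i, d i i = 0) (ρ : α → ℝ) :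
    transportCost d (Matrix.diagonal ρ) = 0 := by
  simp [transportCost, Matrix.diagonal_apply, d_self]

theorem transportCost_sub_diagonal (d_self : ∀ i, d i i = 0) (ρ : α → ℝ) :
    transportCost d (π - Matrix.diagonal ρ) = transportCost d π := by
  simp [transportCost, mul_sub, sum_sub_distrib, Matrix.diagonal_apply, d_self]

theorem isCoupling_diagonal (hρ : 0 ≤ ρ) : IsCoupling (Matrix.diagonal ρ) ρ ρ where
  nonneg i j := by rw [Matrix.diagonal_apply]; split_ifs; exacts [hρ i, le_rfl]
  sum_row i := by simp [Matrix.diagonal_apply]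
  sum_col j := by simp [Matrix.diagonal_apply]

theorem sum_uniformWeight {T : Finset α} (hT : T.Nonempty) : ∑ i, uniformWeight T i = 1 := by
  simp [uniformWeight, hT.card_ne_zero]

theorem uniformWeight_univ_eq (T : Finset α) :
    uniformWeight univ = (#T / Fintype.card α : ℝ) • uniformWeight T +
      (#Tᶜ / Fintype.card α : ℝ) • uniformWeight Tᶜ := by
  ext i
  simp only [uniformWeight, mem_univ, ↓reduceIte, card_univ, Pi.add_apply, Pi.smul_apply,
    smul_eq_mul, mem_compl]
  by_cases hi : i ∈ T
  · have : (#T : ℝ) ≠ 0 := by exact_mod_cast (card_pos.2 ⟨i, hi⟩).ne'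
    simp only [hi, ↓reduceIte, not_true_eq_false, mul_zero, add_zero]
    field_simp
  · have : (#Tᶜ : ℝ) ≠ 0 := by exact_mod_cast (card_pos.2 ⟨i, mem_compl.2 hi⟩).ne'
    simp only [hi, ↓reduceIte, not_false_eq_true, mul_zero, zero_add]
    field_simp

namespace IsCoupling

theorem sub_diagonal_single (hπ : IsCoupling π (μ + Pi.single p r) (ν + Pi.single p r))
    (hr : r ≤ π p p) : IsCoupling (π - Matrix.diagonal (Pi.single p r)) μ ν where
  nonneg i j := by
    by_cases hij : i = j
    · subst hij
      by_cases hi : i = p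
      · subst hi; simpa using hr
      · simpa [hi] using hπ.nonneg i i
    · simpa [hij] using hπ.nonneg i j
  sum_row i := by simp [Matrix.diagonal_apply, sum_sub_distrib, hπ.sum_row]
  sum_col j := by simp [Matrix.diagonal_apply, sum_sub_distrib, hπ.sum_col]

theorem exists_cost_le_of_add_single_of_apply_self_eq_zero
    (d_triangle : ∀ i j l, d i l ≤ d i j + d j l)
    (hπ : IsCoupling π (μ + Pi.single p r) (ν + Pi.single p r)) (hμ : 0 ≤ μ) (hν : 0 ≤ ν)
    (hr : 0 < r) (hpp : π p p = 0) :
    ∃ π', IsCoupling π' μ ν ∧ transportCost d π' ≤ transportCost d π := by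
  have hR : ∑ j, π p j = μ p + r := by simpa using hπ.sum_row p
  have hC : ∑ i, π i p = ν p + r := by simpa using hπ.sum_col p
  have hRpos : 0 < μ p + r := add_pos_of_nonneg_of_pos (hμ p) hr
  have hCpos : 0 < ν p + r := add_pos_of_nonneg_of_pos (hν p) hr
  set u : α → ℝ := fun i ↦ r / (ν p + r) * π i p
  set v : α → ℝ := fun j ↦ r / (μ p + r) * π p j
  have hu : ∀ i, 0 ≤ u i := fun i ↦ mul_nonneg (by positivity) (hπ.nonneg i p)
  have hv : ∀ j, 0 ≤ v j := fun j ↦ mul_nonneg (by positivity) (hπ.nonneg p j)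
  have hu_le : ∀ i, u i ≤ π i p := fun i ↦
    mul_le_of_le_one_left (hπ.nonneg i p) ((div_le_one hCpos).2 (le_add_of_nonneg_left (hν p)))
  have hv_le : ∀ j, v j ≤ π p j := fun j ↦
    mul_le_of_le_one_left (hπ.nonneg p j) ((div_le_one hRpos).2 (le_add_of_nonneg_left (hμ p)))
  have hup : u p = 0 := by simp [u, hpp]
  have hvp : v p = 0 := by simp [v, hpp]
  have hu_sum : ∑ i, u i = r := by simp only [u, ← mul_sum, hC]; field_simp
  have hv_sum : ∑ j, v j = r := by simp only [v, ← mul_sum, hR]; field_simp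
  -- The `r` units entering `p` along `u` are sent straight on along `v`, in proportion `u ⊗ v / r`.
  refine ⟨Matrix.of fun i j ↦
    π i j - (if j = p then u i else 0) - (if i = p then v j else 0) + u i * v j / r, ?_, ?_⟩
  · refine ⟨fun i j ↦ ?_, fun i ↦ ?_, fun j ↦ ?_⟩
    · have huv : 0 ≤ u i * v j / r := by have := hu i; have := hv j; positivity
      by_cases hi : i = p <;> by_cases hj : j = p
      · subst hi hj; simp [hpp, hup, hvp]
      · subst hi; simp [hj, hup, sub_nonneg.2 (hv_le j)]
      · subst hj; simp [hi, hvp, sub_nonneg.2 (hu_le i)]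
      · simp [hi, hj, add_nonneg (hπ.nonneg i j) huv]
    · simp only [of_apply, sum_add_distrib, sum_sub_distrib, hπ.sum_row, Pi.add_apply,
        Pi.single_apply, sum_ite_eq', mem_univ, ↓reduceIte, sum_ite_irrel, hv_sum, sum_const_zero,
        ← sum_div, ← mul_sum, mul_div_cancel_right₀ _ hr.ne']
      ring
    · simp [sum_add_distrib, sum_sub_distrib, ← sum_mul, ← sum_div, hu_sum, hπ.sum_col,
        Pi.single_apply, mul_div_cancel_left₀ _ hr.ne']
  · have hcost : transportCost d (Matrix.of fun i j ↦
        π i j - (if j = p then u i else 0) - (if i = p then v j else 0) + u i * v j / r) =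
        transportCost d π - ∑ i, d i p * u i - ∑ j, d p j * v j +
          (∑ i, ∑ j, d i j * (u i * v j)) / r := by
      simp [transportCost, mul_add, mul_sub, sum_add_distrib, sum_sub_distrib, mul_ite, sum_div,
        mul_div_assoc]
    have hglue : ∑ i, ∑ j, d i j * (u i * v j) ≤
        (∑ i, d i p * u i + ∑ j, d p j * v j) * r :=
      calc ∑ i, ∑ j, d i j * (u i * v j) ≤ ∑ i, ∑ j, (d i p + d p j) * (u i * v j) :=
            sum_le_sum fun i _ ↦ sum_le_sum fun j _ ↦
              mul_le_mul_of_nonneg_right (d_triangle i p j) (mul_nonneg (hu i) (hv j))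
        _ = (∑ i, d i p * u i) * ∑ j, v j + (∑ j, d p j * v j) * ∑ i, u i := by
            rw [sum_mul_sum, sum_mul_sum, sum_comm (f := fun j i ↦ d p j * v j * u i),
              ← sum_add_distrib]
            refine sum_congr rfl fun i _ ↦ ?_
            rw [← sum_add_distrib]
            exact sum_congr rfl fun j _ ↦ by ring
        _ = (∑ i, d i p * u i + ∑ j, d p j * v j) * r := by rw [hu_sum, hv_sum]; ring
    rw [hcost]
    linarith [(div_le_iff₀ hr).2 hglue]

theorem exists_cost_le_of_add_single (d_self : ∀ i, d i i = 0)
    (d_triangle : ∀ i j l, d i l ≤ d i j + d j l)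
    (hπ : IsCoupling π (μ + Pi.single p r) (ν + Pi.single p r)) (hμ : 0 ≤ μ) (hν : 0 ≤ ν) :
    ∃ π', IsCoupling π' μ ν ∧ transportCost d π' ≤ transportCost d π := by
  -- First cancel against the mass `π p p` that stays at `p`; any remainder is rerouted through `p`.
  by_cases hr : r ≤ π p p
  · exact ⟨_, hπ.sub_diagonal_single hr, (transportCost_sub_diagonal d_self _).le⟩
  have hsplit (κ : α → ℝ) :
      κ + Pi.single p r = κ + Pi.single p (r - π p p) + Pi.single p (π p p) := by
    rw [add_assoc, ← Pi.single_add, sub_add_cancel]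
  rw [hsplit μ, hsplit ν] at hπ
  obtain ⟨π', hπ', hcost⟩ :=
    (hπ.sub_diagonal_single le_rfl).exists_cost_le_of_add_single_of_apply_self_eq_zero d_triangle
      hμ hν (sub_pos.2 (not_le.1 hr)) (by simp)
  exact ⟨π', hπ', hcost.trans (transportCost_sub_diagonal d_self _).le⟩

theorem exists_cost_le_of_add (d_self : ∀ i, d i i = 0)
    (d_triangle : ∀ i j l, d i l ≤ d i j + d j l)
    (hπ : IsCoupling π (μ + ρ) (ν + ρ)) (hμ : 0 ≤ μ) (hν : 0 ≤ ν) (hρ : 0 ≤ ρ) :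
    ∃ π', IsCoupling π' μ ν ∧ transportCost d π' ≤ transportCost d π := by
  obtain ⟨s, hs⟩ : ∃ s : Finset α, ∀ i ∉ s, ρ i = 0 := ⟨univ, by simp⟩
  induction s using Finset.induction_on generalizing ρ π with
  | empty =>
    obtain rfl : ρ = 0 := funext fun i ↦ hs i (notMem_empty i)
    exact ⟨π, by simpa using hπ, le_rfl⟩
  | insert p s _ ih =>
    set ρ' := Function.update ρ p 0
    have hρ' : 0 ≤ ρ' := fun i ↦ by
      simp only [ρ', Function.update_apply]; split_ifs; exacts [le_rfl, hρ i]
    have hsplit (κ : α → ℝ) : κ + ρ = κ + ρ' + Pi.single p (ρ p) := by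
      ext i; by_cases hi : i = p <;> simp [ρ', hi]
    rw [hsplit μ, hsplit ν] at hπ
    obtain ⟨π₁, hπ₁, hcost₁⟩ := hπ.exists_cost_le_of_add_single d_self d_triangle
      (add_nonneg hμ hρ') (add_nonneg hν hρ')
    obtain ⟨π₂, hπ₂, hcost₂⟩ := ih hπ₁ hρ' fun i hi ↦ by
      by_cases hip : i = p
      · simp [ρ', hip]
      · simpa [ρ', hip] using hs i (by simp [hip, hi])
    exact ⟨π₂, hπ₂, hcost₂.trans hcost₁⟩

theorem exists_uniformWeight_compl (d_nonneg : ∀ i j, 0 ≤ d i j) (d_self : ∀ i, d i i = 0)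
    (d_symm : ∀ i j, d i j = d j i) (d_triangle : ∀ i j l, d i l ≤ d i j + d j l)
    {T : Finset α} (hT : T.Nonempty) (hcard : #T ≤ #Tᶜ)
    (hπ : IsCoupling π (uniformWeight T) (uniformWeight univ)) :
    ∃ π', IsCoupling π' (uniformWeight Tᶜ) (uniformWeight univ) ∧
      transportCost d π' ≤ transportCost d π := by
  set m : ℝ := ((#T : ℕ) : ℝ)
  set a : ℝ := ((#Tᶜ : ℕ) : ℝ)
  set N : ℝ := (Fintype.card α : ℝ)
  have hm : 0 < m := by simpa [m] using hT.card_pos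
  have hma : m ≤ a := Nat.cast_le.2 hcard
  have ha : 0 < a := hm.trans_le hma
  have hN : m + a = N := by simp only [m, a, N]; exact_mod_cast card_add_card_compl T
  have hNpos : 0 < N := hN ▸ add_pos hm ha
  have hν : uniformWeight univ = (m / N) • uniformWeight T + (a / N) • uniformWeight Tᶜ :=
    uniformWeight_univ_eq T
  clear_value m a N
  have hT_split : uniformWeight T = (a / N) • uniformWeight T + (m / N) • uniformWeight T := by
    rw [← add_smul, ← add_div, add_comm, hN, div_self hNpos.ne', one_smul]
  -- `π` couples `μ_T` with `ν = (m/N) μ_T + (a/N) μ_Tᶜ`; cancelling the common part `(m/N) μ_T`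
  -- leaves a coupling of `(a/N) μ_T` with `(a/N) μ_Tᶜ`.
  rw [hT_split, hν, add_comm ((m / N) • _)] at hπ
  have hw (c : ℝ) (S : Finset α) (hc : 0 ≤ c) : 0 ≤ c • uniformWeight S :=
    smul_nonneg hc (uniformWeight_nonneg S)
  obtain ⟨π₁, hπ₁, hcost₁⟩ := hπ.exists_cost_le_of_add d_self d_triangle
    (hw _ T (by positivity)) (hw _ Tᶜ (by positivity)) (hw _ T (by positivity))
  have hx := (hπ₁.transpose.smul (c := m / a) (by positivity)).add
    (isCoupling_diagonal (hw (a / N) Tᶜ (by positivity)))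
  have hc : m / a * (a / N) = m / N := by field_simp
  rw [smul_smul, smul_smul, hc, ← hν, ← add_smul, ← add_div, hN, div_self hNpos.ne', one_smul] at hx
  refine ⟨_, hx, ?_⟩
  rw [transportCost_add, transportCost_smul, transportCost_transpose d_symm,
    transportCost_diagonal d_self, add_zero]
  calc m / a * transportCost d π₁ ≤ transportCost d π₁ :=
        mul_le_of_le_one_left (transportCost_nonneg d_nonneg hπ₁.nonneg) ((div_le_one ha).2 hma)
    _ ≤ transportCost d π := hcost₁

end IsCoupling

theorem sum_powersetCard_compl {β : Type*} [AddCommMonoid β] (g : Finset α → β) {k : ℕ}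
    (hk : k ≤ Fintype.card α) :
    ∑ T ∈ univ.powersetCard (Fintype.card α - k), g T = ∑ S ∈ univ.powersetCard k, g Sᶜ := by
  refine sum_nbij' (·ᶜ) (·ᶜ) (fun T hT ↦ ?_) (fun S hS ↦ ?_) (by simp) (by simp) (by simp)
  · simp only [mem_powersetCard_univ] at hT ⊢
    simp only [card_compl, hT]
    omega
  · simp only [mem_powersetCard_univ] at hS ⊢
    simp [card_compl, hS]

end Coupling

section transportVal
variable {n : ℕ} {d : Fin n → Fin n → ℝ}

theorem transportVal_eq_sInf (T : Finset (Fin n)) :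
    transportVal n d T =
      sInf (transportCost d '' {π | IsCoupling π (uniformWeight T) (uniformWeight univ)}) := by
  unfold transportVal
  congr 1
  ext c
  constructor
  · rintro ⟨y, hy0, hyrow, hycol, rfl⟩
    refine ⟨Matrix.of fun i j ↦ if i ∈ T then y i j else 0,
      ⟨fun i j ↦ ?_, fun i ↦ ?_, fun j ↦ ?_⟩, ?_⟩
    · simp only [of_apply]; split_ifs; exacts [hy0 i j, le_rfl]
    · by_cases hi : i ∈ T <;> simp [uniformWeight, hi, hyrow]
    · simp [uniformWeight, sum_ite_mem, hycol]
    · simp [transportCost, mul_ite, sum_ite_mem]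
  · rintro ⟨x, hx, rfl⟩
    have hzero : ∀ i ∉ T, ∀ j, x i j = 0 := fun i hi ↦
      hx.apply_eq_zero (by simp [uniformWeight, hi])
    have hsum (f : Fin n → ℝ) (hf : ∀ i ∉ T, f i = 0) : ∑ i ∈ T, f i = ∑ i, f i :=
      sum_subset (subset_univ T) fun i _ hi ↦ hf i hi
    refine ⟨x, hx.nonneg, fun i hi ↦ by simp [hx.sum_row, uniformWeight, hi], fun j ↦ ?_, ?_⟩
    · rw [hsum _ fun i hi ↦ hzero i hi j, hx.sum_col]
      simp [uniformWeight]
    · exact (hsum _ fun i hi ↦ by simp [hzero i hi]).symm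

theorem transportVal_nonneg (d_nonneg : ∀ i j, 0 ≤ d i j) (T : Finset (Fin n)) :
    0 ≤ transportVal n d T := by
  rw [transportVal_eq_sInf]
  exact Real.sInf_nonneg fun _ ⟨π, hπ, hc⟩ ↦ hc ▸ transportCost_nonneg d_nonneg hπ.nonneg

theorem transportVal_univ (d_nonneg : ∀ i j, 0 ≤ d i j) (d_self : ∀ i, d i i = 0) :
    transportVal n d univ = 0 := by
  refine le_antisymm ?_ (transportVal_nonneg d_nonneg _)
  rw [transportVal_eq_sInf]
  exact csInf_le_of_le (bddBelow_transportCost_image d_nonneg _ _)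
    ⟨_, isCoupling_diagonal (uniformWeight_nonneg _), rfl⟩ (transportCost_diagonal d_self _).le

theorem transportVal_compl_le (d_nonneg : ∀ i j, 0 ≤ d i j) (d_self : ∀ i, d i i = 0)
    (d_symm : ∀ i j, d i j = d j i) (d_triangle : ∀ i j l, d i l ≤ d i j + d j l)
    {T : Finset (Fin n)} (hT : T.Nonempty) (hcard : 2 * #T ≤ n) :
    transportVal n d Tᶜ ≤ transportVal n d T := by
  rw [transportVal_eq_sInf, transportVal_eq_sInf]
  refine le_csInf ⟨_, _, isCoupling_vecMulVec (uniformWeight_nonneg _) (uniformWeight_nonneg _)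
    (sum_uniformWeight hT) (sum_uniformWeight (hT.mono (subset_univ T))), rfl⟩ ?_
  rintro _ ⟨π, hπ, rfl⟩
  obtain ⟨π', hπ', hle⟩ := hπ.exists_uniformWeight_compl d_nonneg d_self d_symm d_triangle hT
    (by rw [card_compl, Fintype.card_fin]; omega)
  exact csInf_le_of_le (bddBelow_transportCost_image d_nonneg _ _) ⟨π', hπ', rfl⟩ hle

end transportVal

theorem sum_Icc_le_two_mul_sum_Icc_half {f : ℕ → ℝ} {n : ℕ} (hf : ∀ k, 0 ≤ f k) (hfn : f n = 0)
    (hsymm : ∀ k, 1 ≤ k → 2 * k ≤ n → f (n - k) ≤ f k) :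
    ∑ k ∈ Icc 1 n, f k ≤ 2 * ∑ k ∈ Icc 1 (n / 2), f k := by
  have hIcc (m : ℕ) : Icc 1 m = Ioc 0 m := Icc_add_one_left_eq_Ioc 0 m
  have hsplit : ∑ k ∈ Icc 1 n, f k = ∑ k ∈ Icc 1 (n / 2), f k + ∑ k ∈ Ioc (n / 2) n, f k := by
    rw [hIcc, hIcc, sum_Ioc_consecutive _ (Nat.zero_le _) (Nat.div_le_self n 2)]
  have hupper : ∑ k ∈ Ioc (n / 2) n, f k ≤ ∑ k ∈ Icc 1 (n / 2), f k :=
    calc ∑ k ∈ Ioc (n / 2) n, f k = ∑ k ∈ Ioo (n / 2) n, f k := by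
          refine (sum_subset Ioo_subset_Ioc_self fun k hk hk' ↦ ?_).symm
          obtain rfl : k = n := by simp only [mem_Ioc, mem_Ioo] at hk hk'; omega
          exact hfn
      _ ≤ ∑ k ∈ Ioo (n / 2) n, f (n - k) := sum_le_sum fun k hk ↦ by
          simp only [mem_Ioo] at hk
          simpa [Nat.sub_sub_self hk.2.le] using hsymm (n - k) (by omega) (by omega)
      _ = ∑ k ∈ (Ioo (n / 2) n).image (n - ·), f k := by
          refine (sum_image fun x hx y hy h ↦ ?_).symm
          simp only [coe_Ioo, Set.mem_Ioo] at hx hy h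
          omega
      _ ≤ ∑ k ∈ Icc 1 (n / 2), f k := by
          refine sum_le_sum_of_subset_of_nonneg (fun j ↦ ?_) fun k _ _ ↦ hf k
          simp only [mem_image, mem_Ioo, mem_Icc]
          rintro ⟨k, hk, rfl⟩
          omega
  linarith [sum_nonneg fun k (_ : k ∈ Icc 1 (n / 2)) ↦ hf k]

noncomputable def expectedTransportVal (n : ℕ) (d : Fin n → Fin n → ℝ) (k : ℕ) : ℝ :=
  (∑ T ∈ univ.powersetCard k, transportVal n d T) / (n.choose k : ℝ)

section expectedTransportVal
variable {n : ℕ} {d : Fin n → Fin n → ℝ}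

theorem expectedTransportVal_nonneg (d_nonneg : ∀ i j, 0 ≤ d i j) (k : ℕ) :
    0 ≤ expectedTransportVal n d k :=
  div_nonneg (sum_nonneg fun T _ ↦ transportVal_nonneg d_nonneg T) (Nat.cast_nonneg _)

theorem expectedTransportVal_self (d_nonneg : ∀ i j, 0 ≤ d i j) (d_self : ∀ i, d i i = 0) :
    expectedTransportVal n d n = 0 := by
  have : univ.powersetCard n = {(univ : Finset (Fin n))} := by
    simpa using powersetCard_self (univ : Finset (Fin n))
  simp [expectedTransportVal, this, transportVal_univ d_nonneg d_self]

theorem expectedTransportVal_sub_le (d_nonneg : ∀ i j, 0 ≤ d i j) (d_self : ∀ i, d i i = 0)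
    (d_symm : ∀ i j, d i j = d j i) (d_triangle : ∀ i j l, d i l ≤ d i j + d j l)
    {k : ℕ} (hk : 1 ≤ k) (hkn : 2 * k ≤ n) :
    expectedTransportVal n d (n - k) ≤ expectedTransportVal n d k := by
  unfold expectedTransportVal
  rw [Nat.choose_symm (by omega)]
  refine div_le_div_of_nonneg_right ?_ (Nat.cast_nonneg _)
  have hcompl : ∑ T ∈ univ.powersetCard (n - k), transportVal n d T =
      ∑ S ∈ univ.powersetCard k, transportVal n d Sᶜ := by
    simpa only [Fintype.card_fin] using
      sum_powersetCard_compl (transportVal n d) (k := k) (by rw [Fintype.card_fin]; omega)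
  rw [hcompl]
  refine sum_le_sum fun S hS ↦ ?_
  rw [mem_powersetCard_univ] at hS
  exact transportVal_compl_le d_nonneg d_self d_symm d_triangle (card_pos.1 (by omega)) (by omega)

end expectedTransportVal

/-- On an `n`-point metric space,
`∑_{k=1}^n E_{S_k ~ U_k}[M(S_k)] ≤ 2 ∑_{k=1}^{⌊n/2⌋} E_{S_k ~ U_k}[M(S_k)]`,
where `U_k` is the uniform distribution over `k`-subsets. -/
theorem stmt_15 (n : ℕ) (d : Fin n → Fin n → ℝ)
    (d_nonneg : ∀ i j, 0 ≤ d i j) (d_self : ∀ i, d i i = 0)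
    (d_symm : ∀ i j, d i j = d j i)
    (d_triangle : ∀ i j l, d i l ≤ d i j + d j l) :
    ∑ k ∈ Finset.Icc 1 n,
        (∑ T ∈ Finset.univ.powersetCard k, transportVal n d T) / (n.choose k : ℝ) ≤
      2 * ∑ k ∈ Finset.Icc 1 (n / 2),
        (∑ T ∈ Finset.univ.powersetCard k, transportVal n d T) / (n.choose k : ℝ) :=
  sum_Icc_le_two_mul_sum_Icc_half (expectedTransportVal_nonneg d_nonneg)
    (expectedTransportVal_self d_nonneg d_self)
    fun _ hk hkn ↦ expectedTransportVal_sub_le d_nonneg d_self d_symm d_triangle hk hkn
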